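/- For integers n, m ≥ 3, the F-index of the edge Q-join of the cycle C_n and the cycle C_m is F(C_n ∨̱_Q C_m) = mn(m² + n²) + 12m²n + 6mn² + 60mn + 8m + 72n. -/

import Mathlib

/-- The subdivision graph `S(G)`: a new vertex is inserted into each edge of `G`
(each edge is replaced by a path of length 2). The inserted vertices form the
right summand `↥G.edgeSet`. -/
def Sgraph {V : Type*} (G : SimpleGraph V) : SimpleGraph (V ⊕ ↥G.edgeSet) where
  Adj x y :=
    match x, y with
    | Sum.inl v, Sum.inr e => v ∈ (e : Sym2 V)
    | Sum.inr e, Sum.inl v => v ∈ (e : Sym2 V)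
    | _, _ => False
  symm := by constructor; rintro (v | e) (w | f) h <;> exact h
  loopless := by constructor; rintro (v | e) h <;> exact h

/-- The graph `R(G)`: obtained from `G` by inserting a new vertex into each edge of `G`
and joining each new vertex to the end vertices of its corresponding edge. -/
def Rgraph {V : Type*} (G : SimpleGraph V) : SimpleGraph (V ⊕ ↥G.edgeSet) where
  Adj x y :=
    match x, y with
    | Sum.inl v, Sum.inl w => G.Adj v w
    | Sum.inl v, Sum.inr e => v ∈ (e : Sym2 V)
    | Sum.inr e, Sum.inl v => v ∈ (e : Sym2 V)
    | Sum.inr _, Sum.inr _ => False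
  symm := by
    constructor
    rintro (v | e) (w | f) h
    · exact G.adj_symm h
    · exact h
    · exact h
    · exact h
  loopless := by
    constructor
    rintro (v | e) h
    · exact G.irrefl h
    · exact h

/-- The graph `Q(G)`: obtained from `G` by inserting a new vertex into each edge of `G`,
then joining by edges those pairs of new vertices lying on adjacent edges of `G`. -/
def Qgraph {V : Type*} (G : SimpleGraph V) : SimpleGraph (V ⊕ ↥G.edgeSet) where
  Adj x y :=
    match x, y with
    | Sum.inl _, Sum.inl _ => False
    | Sum.inl v, Sum.inr e => v ∈ (e : Sym2 V)
    | Sum.inr e, Sum.inl v => v ∈ (e : Sym2 V)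
    | Sum.inr e, Sum.inr f => e ≠ f ∧ ∃ v, v ∈ (e : Sym2 V) ∧ v ∈ (f : Sym2 V)
  symm := by
    constructor
    rintro (v | e) (w | f) h
    · exact h
    · exact h
    · exact h
    · exact ⟨h.1.symm, by obtain ⟨v, h1, h2⟩ := h.2; exact ⟨v, h2, h1⟩⟩
  loopless := by
    constructor
    rintro (v | e) h
    · exact h
    · exact h.1 rfl

/-- The total graph `T(G)`: obtained from `G` by inserting a new vertex into each edge,
joining each new vertex to the end vertices of its corresponding edge, and joining by
edges those pairs of new vertices lying on adjacent edges of `G`. -/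
def Tgraph {V : Type*} (G : SimpleGraph V) : SimpleGraph (V ⊕ ↥G.edgeSet) where
  Adj x y :=
    match x, y with
    | Sum.inl v, Sum.inl w => G.Adj v w
    | Sum.inl v, Sum.inr e => v ∈ (e : Sym2 V)
    | Sum.inr e, Sum.inl v => v ∈ (e : Sym2 V)
    | Sum.inr e, Sum.inr f => e ≠ f ∧ ∃ v, v ∈ (e : Sym2 V) ∧ v ∈ (f : Sym2 V)
  symm := by
    constructor
    rintro (v | e) (w | f) h
    · exact G.adj_symm h
    · exact h
    · exact h
    · exact ⟨h.1.symm, by obtain ⟨v, h1, h2⟩ := h.2; exact ⟨v, h2, h1⟩⟩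
  loopless := by
    constructor
    rintro (v | e) h
    · exact G.irrefl h
    · exact h.1 rfl

/-- The disjoint union of `H` and `K` together with all edges joining a vertex `a` of `H`
with `P a` to every vertex of `K`. -/
def joinOn {A B : Type*} (H : SimpleGraph A) (K : SimpleGraph B) (P : A → Prop) :
    SimpleGraph (A ⊕ B) where
  Adj x y :=
    match x, y with
    | Sum.inl a, Sum.inl a' => H.Adj a a'
    | Sum.inr b, Sum.inr b' => K.Adj b b'
    | Sum.inl a, Sum.inr _ => P a
    | Sum.inr _, Sum.inl a => P a
  symm := by
    constructor
    rintro (a | b) (a' | b') h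
    · exact H.adj_symm h
    · exact h
    · exact h
    · exact K.adj_symm h
  loopless := by
    constructor
    rintro (a | b) h
    · exact H.irrefl h
    · exact K.irrefl h

/-- The vertex S-join `G₁ ∨̇_S G₂`: obtained from `S(G₁)` and `G₂` by joining each vertex
of `V(G₁)` to every vertex of `G₂`. -/
def vertexSJoin {V₁ V₂ : Type*} (G₁ : SimpleGraph V₁) (G₂ : SimpleGraph V₂) :
    SimpleGraph ((V₁ ⊕ ↥G₁.edgeSet) ⊕ V₂) :=
  joinOn (Sgraph G₁) G₂ (fun x => x.isLeft)

/-- The edge S-join `G₁ ∨̱_S G₂`: obtained from `S(G₁)` and `G₂` by joining each inserted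
vertex (each vertex of `I(G₁)`) to every vertex of `G₂`. -/
def edgeSJoin {V₁ V₂ : Type*} (G₁ : SimpleGraph V₁) (G₂ : SimpleGraph V₂) :
    SimpleGraph ((V₁ ⊕ ↥G₁.edgeSet) ⊕ V₂) :=
  joinOn (Sgraph G₁) G₂ (fun x => x.isRight)

/-- The vertex R-join `G₁ ∨̇_R G₂`. -/
def vertexRJoin {V₁ V₂ : Type*} (G₁ : SimpleGraph V₁) (G₂ : SimpleGraph V₂) :
    SimpleGraph ((V₁ ⊕ ↥G₁.edgeSet) ⊕ V₂) :=
  joinOn (Rgraph G₁) G₂ (fun x => x.isLeft)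

/-- The edge R-join `G₁ ∨̱_R G₂`. -/
def edgeRJoin {V₁ V₂ : Type*} (G₁ : SimpleGraph V₁) (G₂ : SimpleGraph V₂) :
    SimpleGraph ((V₁ ⊕ ↥G₁.edgeSet) ⊕ V₂) :=
  joinOn (Rgraph G₁) G₂ (fun x => x.isRight)

/-- The vertex Q-join `G₁ ∨̇_Q G₂`. -/
def vertexQJoin {V₁ V₂ : Type*} (G₁ : SimpleGraph V₁) (G₂ : SimpleGraph V₂) :
    SimpleGraph ((V₁ ⊕ ↥G₁.edgeSet) ⊕ V₂) :=
  joinOn (Qgraph G₁) G₂ (fun x => x.isLeft)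

/-- The edge Q-join `G₁ ∨̱_Q G₂`. -/
def edgeQJoin {V₁ V₂ : Type*} (G₁ : SimpleGraph V₁) (G₂ : SimpleGraph V₂) :
    SimpleGraph ((V₁ ⊕ ↥G₁.edgeSet) ⊕ V₂) :=
  joinOn (Qgraph G₁) G₂ (fun x => x.isRight)

/-- The vertex T-join `G₁ ∨̇_T G₂`. -/
def vertexTJoin {V₁ V₂ : Type*} (G₁ : SimpleGraph V₁) (G₂ : SimpleGraph V₂) :
    SimpleGraph ((V₁ ⊕ ↥G₁.edgeSet) ⊕ V₂) :=
  joinOn (Tgraph G₁) G₂ (fun x => x.isLeft)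

/-- The edge T-join `G₁ ∨̱_T G₂`. -/
def edgeTJoin {V₁ V₂ : Type*} (G₁ : SimpleGraph V₁) (G₂ : SimpleGraph V₂) :
    SimpleGraph ((V₁ ⊕ ↥G₁.edgeSet) ⊕ V₂) :=
  joinOn (Tgraph G₁) G₂ (fun x => x.isRight)

/-- Degree of a vertex in a graph on a finite vertex type. -/
noncomputable def gdeg {V : Type*} [Finite V] (G : SimpleGraph V) (v : V) : ℕ :=
  haveI : Fintype ↥(G.neighborSet v) := Fintype.ofFinite _
  G.degree v

/-- The forgotten topological index (F-index): `F(G) = ∑_{v ∈ V(G)} d_G(v)³`. -/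
noncomputable def Findex {V : Type*} [Finite V] (G : SimpleGraph V) : ℕ :=
  haveI := Fintype.ofFinite V
  ∑ v : V, gdeg G v ^ 3

/-- The first Zagreb index: `M₁(G) = ∑_{v ∈ V(G)} d_G(v)²`. -/
noncomputable def M1 {V : Type*} [Finite V] (G : SimpleGraph V) : ℕ :=
  haveI := Fintype.ofFinite V
  ∑ v : V, gdeg G v ^ 2

/-- `M₄(G) = ∑_{v ∈ V(G)} d_G(v)⁴`. -/
noncomputable def M4 {V : Type*} [Finite V] (G : SimpleGraph V) : ℕ :=
  haveI := Fintype.ofFinite V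
  ∑ v : V, gdeg G v ^ 4

/-- The hyper Zagreb index: `HM(G) = ∑_{uv ∈ E(G)} (d_G(u) + d_G(v))²`. -/
noncomputable def HM {V : Type*} [Finite V] (G : SimpleGraph V) : ℕ :=
  haveI : Fintype ↥G.edgeSet := Fintype.ofFinite _
  ∑ e : ↥G.edgeSet,
    Sym2.lift ⟨fun u v => (gdeg G u + gdeg G v) ^ 2,
      fun u v => by dsimp only; rw [add_comm]⟩ (e : Sym2 V)

/-- The redefined Zagreb index:
`ReZM(G) = ∑_{uv ∈ E(G)} d_G(u) d_G(v) (d_G(u) + d_G(v))`. -/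
noncomputable def ReZM {V : Type*} [Finite V] (G : SimpleGraph V) : ℕ :=
  haveI : Fintype ↥G.edgeSet := Fintype.ofFinite _
  ∑ e : ↥G.edgeSet,
    Sym2.lift ⟨fun u v => gdeg G u * gdeg G v * (gdeg G u + gdeg G v),
      fun u v => by dsimp only; ring⟩ (e : Sym2 V)

/-- The number of edges of `G`. -/
noncomputable def numEdges {V : Type*} (G : SimpleGraph V) : ℕ :=
  Nat.card ↥G.edgeSet



/-! In `C_n ∨̱_Q C_m` a vertex of `C_n` keeps degree 2, the vertex inserted into an edge `uv` has
degree `d(u) + d(v) + m = m + 4` (its two ends, the `d(u) + d(v) - 2` edges of the line graph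
meeting `uv`, and all of `C_m`), and a vertex of `C_m` has degree `n + 2` (one neighbour per edge of
`C_n`). Hence `F = 8n + n(m + 4)³ + m(n + 2)³`. -/

open SimpleGraph

theorem Sym2.natCard_mem_mk {V : Type*} {u v : V} (h : u ≠ v) :
    Nat.card {w : V // w ∈ s(u, v)} = 2 := by
  rw [← Set.ncard_pair h, ← Nat.card_coe_set_eq]
  exact Nat.card_congr (Equiv.subtypeEquivRight fun w => by simp)

namespace SimpleGraph

variable {V : Type*} {G : SimpleGraph V}

theorem image_val_lineGraph_neighborSet {u v : V} (h : G.Adj u v) :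
    Subtype.val '' G.lineGraph.neighborSet ⟨s(u, v), h⟩ =
      (G.incidenceSet u ∪ G.incidenceSet v) \ {s(u, v)} := by
  ext f
  simp only [Set.mem_image, mem_neighborSet, lineGraph_adj_iff_exists, Sym2.mem_iff,
    Set.mem_sdiff, Set.mem_union, Set.mem_singleton_iff, incidenceSet, Set.mem_ofPred_eq]
  constructor
  · rintro ⟨⟨f, hf⟩, ⟨hne, x, rfl | rfl, hx⟩, rfl⟩
    · exact ⟨Or.inl ⟨hf, hx⟩, fun h' => hne (Subtype.ext h'.symm)⟩
    · exact ⟨Or.inr ⟨hf, hx⟩, fun h' => hne (Subtype.ext h'.symm)⟩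
  · rintro ⟨hf, hne⟩
    refine ⟨⟨f, ?_⟩, ⟨fun h' => hne (congrArg Subtype.val h').symm, ?_⟩, rfl⟩
    · rcases hf with hf | hf <;> exact hf.1
    · rcases hf with hf | hf
      · exact ⟨u, Or.inl rfl, hf.2⟩
      · exact ⟨v, Or.inr rfl, hf.2⟩

theorem natCard_lineGraph_neighborSet_add_two [Fintype V] [DecidableEq V] [DecidableRel G.Adj]
    {u v : V} (h : G.Adj u v) :
    Nat.card (G.lineGraph.neighborSet ⟨s(u, v), h⟩) + 2 = G.degree u + G.degree v := by
  have hinc (w : V) : (G.incidenceSet w).ncard = G.degree w := by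
    rw [← Nat.card_coe_set_eq, Nat.card_eq_fintype_card, card_incidenceSet_eq_degree]
  have hmem : s(u, v) ∈ G.incidenceSet u ∪ G.incidenceSet v :=
    Or.inl (G.mk'_mem_incidenceSet_left_iff.2 h)
  have hunion := Set.ncard_union_add_ncard_inter (G.incidenceSet u) (G.incidenceSet v)
  rw [incidenceSet_inter_incidenceSet_of_adj _ h, Set.ncard_singleton, hinc, hinc] at hunion
  rw [Nat.card_coe_set_eq, ← Set.ncard_image_of_injective _ Subtype.val_injective,
    image_val_lineGraph_neighborSet h]
  have := Set.ncard_sdiff_singleton_add_one hmem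
  omega

theorem IsRegularOfDegree.two_mul_numEdges [Fintype V] [DecidableEq V] [DecidableRel G.Adj]
    {r : ℕ} (h : G.IsRegularOfDegree r) : 2 * numEdges G = Fintype.card V * r := by
  rw [numEdges, Nat.card_eq_fintype_card, ← edgeFinset_card, ← sum_degrees_eq_twice_card_edges]
  simp [h.degree_eq]

theorem cycleGraph_isRegularOfDegree_two (n : ℕ) : (cycleGraph (n + 3)).IsRegularOfDegree 2 :=
  fun _ => cycleGraph_degree_three_le

end SimpleGraph

section Degrees

variable {V : Type*} (G : SimpleGraph V)

theorem gdeg_eq_degree [Finite V] (v : V) [Fintype (G.neighborSet v)] :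
    gdeg G v = G.degree v := by
  rw [gdeg, Subsingleton.elim (Fintype.ofFinite (G.neighborSet v)) ‹_›]

theorem gdeg_eq_natCard_neighborSet [Finite V] (v : V) :
    gdeg G v = Nat.card (G.neighborSet v) := by
  have := Fintype.ofFinite (G.neighborSet v)
  rw [gdeg_eq_degree, ← card_neighborSet_eq_degree, Nat.card_eq_fintype_card]

theorem Findex_eq_sum_gdeg [Fintype V] : Findex G = ∑ v, gdeg G v ^ 3 := by
  rw [Findex, Subsingleton.elim (Fintype.ofFinite V) ‹_›]

end Degrees

namespace Qgraph

variable {V : Type*} (G : SimpleGraph V)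

def neighborSetInlEquiv (v : V) :
    (Qgraph G).neighborSet (.inl v) ≃ {e : G.edgeSet // v ∈ (e : Sym2 V)} where
  toFun
    | ⟨.inl _, h⟩ => h.elim
    | ⟨.inr e, h⟩ => ⟨e, h⟩
  invFun e := ⟨.inr e.1, e.2⟩
  left_inv := by rintro ⟨_ | _, h⟩ <;> first | rfl | exact h.elim
  right_inv _ := rfl

def neighborSetInrEquiv (e : G.edgeSet) :
    (Qgraph G).neighborSet (.inr e) ≃
      {w : V // w ∈ (e : Sym2 V)} ⊕ G.lineGraph.neighborSet e where
  toFun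
    | ⟨.inl w, h⟩ => .inl ⟨w, h⟩
    | ⟨.inr f, h⟩ => .inr ⟨f, lineGraph_adj_iff_exists.2 h⟩
  invFun
    | .inl w => ⟨.inl w.1, w.2⟩
    | .inr f => ⟨.inr f.1, lineGraph_adj_iff_exists.1 f.2⟩
  left_inv := by rintro ⟨_ | _, h⟩ <;> rfl
  right_inv := by rintro (_ | _) <;> rfl

variable [Fintype V] [DecidableEq V] [DecidableRel G.Adj]

theorem natCard_neighborSet_inl (v : V) :
    Nat.card ((Qgraph G).neighborSet (.inl v)) = G.degree v := by
  rw [Nat.card_congr (neighborSetInlEquiv G v), ← card_incidenceSet_eq_degree,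
    ← Nat.card_eq_fintype_card]
  exact Nat.card_congr
    { toFun e := ⟨e.1.1, e.1.2, e.2⟩
      invFun e := ⟨⟨e.1, e.2.1⟩, e.2.2⟩ }

theorem natCard_neighborSet_inr {u v : V} (h : G.Adj u v) :
    Nat.card ((Qgraph G).neighborSet (.inr ⟨s(u, v), h⟩)) = G.degree u + G.degree v := by
  rw [Nat.card_congr (neighborSetInrEquiv G _), Nat.card_sum, Sym2.natCard_mem_mk h.ne,
    ← natCard_lineGraph_neighborSet_add_two h, add_comm]

end Qgraph

namespace joinOn

variable {A B : Type*} (H : SimpleGraph A) (K : SimpleGraph B) (P : A → Prop)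

def neighborSetInlEquivOfNot {a : A} (ha : ¬P a) :
    (joinOn H K P).neighborSet (.inl a) ≃ H.neighborSet a where
  toFun
    | ⟨.inl a', h⟩ => ⟨a', h⟩
    | ⟨.inr _, h⟩ => (ha h).elim
  invFun a' := ⟨.inl a'.1, a'.2⟩
  left_inv := by rintro ⟨_ | _, h⟩ <;> first | rfl | exact (ha h).elim
  right_inv _ := rfl

def neighborSetInlEquivOf {a : A} (ha : P a) :
    (joinOn H K P).neighborSet (.inl a) ≃ H.neighborSet a ⊕ B where
  toFun
    | ⟨.inl a', h⟩ => .inl ⟨a', h⟩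
    | ⟨.inr b, _⟩ => .inr b
  invFun
    | .inl a' => ⟨.inl a'.1, a'.2⟩
    | .inr b => ⟨.inr b, ha⟩
  left_inv := by rintro ⟨_ | _, h⟩ <;> rfl
  right_inv := by rintro (_ | _) <;> rfl

def neighborSetInrEquiv (b : B) :
    (joinOn H K P).neighborSet (.inr b) ≃ {a // P a} ⊕ K.neighborSet b where
  toFun
    | ⟨.inl a, h⟩ => .inl ⟨a, h⟩
    | ⟨.inr b', h⟩ => .inr ⟨b', h⟩
  invFun
    | .inl a => ⟨.inl a.1, a.2⟩
    | .inr b' => ⟨.inr b'.1, b'.2⟩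
  left_inv := by rintro ⟨_ | _, h⟩ <;> rfl
  right_inv := by rintro (_ | _) <;> rfl

end joinOn

namespace edgeQJoin

variable {V₁ V₂ : Type*} (G₁ : SimpleGraph V₁) (G₂ : SimpleGraph V₂)

theorem gdeg_inr [Finite V₁] [Finite V₂] (b : V₂) :
    gdeg (edgeQJoin G₁ G₂) (.inr b) = numEdges G₁ + gdeg G₂ b := by
  rw [gdeg_eq_natCard_neighborSet, edgeQJoin,
    Nat.card_congr (joinOn.neighborSetInrEquiv _ _ _ b), Nat.card_sum,
    Nat.card_congr Equiv.sumIsRight, gdeg_eq_natCard_neighborSet, numEdges]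

variable [Fintype V₁] [DecidableEq V₁] [DecidableRel G₁.Adj] [Finite V₂]

theorem gdeg_inl_inl (v : V₁) : gdeg (edgeQJoin G₁ G₂) (.inl (.inl v)) = G₁.degree v := by
  rw [gdeg_eq_natCard_neighborSet, edgeQJoin,
    Nat.card_congr (joinOn.neighborSetInlEquivOfNot (Qgraph G₁) G₂ (fun x => x.isRight)
      (a := .inl v) Bool.false_ne_true),
    Qgraph.natCard_neighborSet_inl]

theorem gdeg_inl_inr {u v : V₁} (h : G₁.Adj u v) :
    gdeg (edgeQJoin G₁ G₂) (.inl (.inr ⟨s(u, v), h⟩)) =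
      G₁.degree u + G₁.degree v + Nat.card V₂ := by
  rw [gdeg_eq_natCard_neighborSet, edgeQJoin,
    Nat.card_congr (joinOn.neighborSetInlEquivOf (Qgraph G₁) G₂ (fun x => x.isRight)
      (a := .inr ⟨s(u, v), h⟩) rfl),
    Nat.card_sum, Qgraph.natCard_neighborSet_inr]

end edgeQJoin

theorem Findex_edgeQJoin_of_isRegularOfDegree {V₁ V₂ : Type*} [Fintype V₁] [DecidableEq V₁]
    [Fintype V₂] {G₁ : SimpleGraph V₁} {G₂ : SimpleGraph V₂} [DecidableRel G₁.Adj]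
    [DecidableRel G₂.Adj] {r₁ r₂ : ℕ} (h₁ : G₁.IsRegularOfDegree r₁)
    (h₂ : G₂.IsRegularOfDegree r₂) :
    Findex (edgeQJoin G₁ G₂) =
      Fintype.card V₁ * r₁ ^ 3 + numEdges G₁ * (2 * r₁ + Fintype.card V₂) ^ 3 +
        Fintype.card V₂ * (numEdges G₁ + r₂) ^ 3 := by
  have hedge (e : G₁.edgeSet) :
      gdeg (edgeQJoin G₁ G₂) (.inl (.inr e)) = 2 * r₁ + Fintype.card V₂ := by
    obtain ⟨e, he⟩ := e
    induction e using Sym2.ind with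
    | _ u v => rw [edgeQJoin.gdeg_inl_inr _ _ he, h₁.degree_eq, h₁.degree_eq,
        Nat.card_eq_fintype_card, two_mul]
  rw [Findex_eq_sum_gdeg, Fintype.sum_sum_type, Fintype.sum_sum_type]
  simp only [edgeQJoin.gdeg_inl_inl, h₁.degree_eq, hedge, edgeQJoin.gdeg_inr, gdeg_eq_degree,
    h₂.degree_eq, Finset.sum_const, Finset.card_univ, smul_eq_mul, numEdges,
    Nat.card_eq_fintype_card]

theorem numEdges_cycleGraph (n : ℕ) : numEdges (cycleGraph (n + 3)) = n + 3 := by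
  have := (cycleGraph_isRegularOfDegree_two n).two_mul_numEdges
  rw [Fintype.card_fin] at this
  omega

theorem Findex_edgeQJoin_ex17 (n m : ℕ) (hn : 3 ≤ n) (hm : 3 ≤ m) :
    (Findex (edgeQJoin (SimpleGraph.cycleGraph n) (SimpleGraph.cycleGraph m)) : ℤ) =
      (m : ℤ) * (n : ℤ) * ((m : ℤ) ^ 2 + (n : ℤ) ^ 2) + 12 * (m : ℤ) ^ 2 * (n : ℤ) + 6 * (m : ℤ) * (n : ℤ) ^ 2 + 60 * (m : ℤ) * (n : ℤ) + 8 * (m : ℤ) + 72 * (n : ℤ) := by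
  obtain ⟨n, rfl⟩ := Nat.exists_eq_add_of_le' hn
  obtain ⟨m, rfl⟩ := Nat.exists_eq_add_of_le' hm
  rw [Findex_edgeQJoin_of_isRegularOfDegree (cycleGraph_isRegularOfDegree_two n)
    (cycleGraph_isRegularOfDegree_two m), numEdges_cycleGraph, Fintype.card_fin, Fintype.card_fin]
  push_cast
  ring
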